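/- Let b ≥ 0 and let m1, m0 : ℝ → ℝ satisfy the smoothness assumption with constant b on [0,1], and suppose in addition there are constants Yu1 and Yl0 with m1(v) ≤ Yu1 and m0(v) ≥ Yl0 for all v ∈ [0,1]. Let 0 ≤ p' < p ≤ 1 and set ΔY := ∫_{p'}^{p} (m1(v) − m0(v)) dv. Then ∫_0^1 (m1(v) − m0(v)) dv ≤ min{ Yu1 − Yl0, ΔY/(p − p') + (2b/3)·(p³ − p'³)/(p − p') − b·(p² − p'²)/(p − p') + b }. -/

import Mathlib

/-!
The difference `D = m1 - m0` is `2b`-Lipschitz on `[0, 1]`, so `D v ≤ D u + 2b |v - u|`.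
Integrating in `v` over `[0, 1]` gives `ATE ≤ D u + b (2u² - 2u + 1)` for every `u ∈ [0, 1]`,
and integrating this in `u` over `[p', p]` gives
`(p - p') ATE ≤ ΔY + b (2 (p³ - p'³) / 3 - (p² - p'²) + (p - p'))`.
The Manski bound is the integral of the pointwise bound `m1 - m0 ≤ Yu1 - Yl0`.
-/

open Set intervalIntegral

open scoped NNReal

theorem integral_abs_sub_of_mem_Icc {a b u : ℝ} (hu : u ∈ Icc a b) :
    ∫ v in a..b, |v - u| = ((u - a) ^ 2 + (b - u) ^ 2) / 2 := by
  have hcont : Continuous fun v : ℝ => |v - u| := by fun_prop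
  have hleft : ∫ v in a..u, |v - u| = ∫ v in a..u, (u - v) :=
    integral_congr fun v hv => by
      rw [uIcc_of_le hu.1] at hv
      rw [abs_of_nonpos (by linarith [hv.2]), neg_sub]
  have hright : ∫ v in u..b, |v - u| = ∫ v in u..b, (v - u) :=
    integral_congr fun v hv => by
      rw [uIcc_of_le hu.2] at hv
      exact abs_of_nonneg (by linarith [hv.1])
  rw [← integral_add_adjacent_intervals (hcont.intervalIntegrable a u)
    (hcont.intervalIntegrable u b), hleft, hright]
  simp only [integral_comp_sub_left fun v => v, integral_comp_sub_right fun v => v, integral_id]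
  ring

theorem LipschitzOnWith.integral_le {f : ℝ → ℝ} {K : ℝ≥0} {a b u : ℝ} (hab : a ≤ b)
    (hf : LipschitzOnWith K f (Icc a b)) (hu : u ∈ Icc a b) :
    ∫ v in a..b, f v ≤ (b - a) * f u + K * (((u - a) ^ 2 + (b - u) ^ 2) / 2) := by
  have hdist : Continuous fun v : ℝ => K * |v - u| := by fun_prop
  calc ∫ v in a..b, f v ≤ ∫ v in a..b, (f u + K * |v - u|) :=
        integral_mono_on hab (hf.continuousOn.intervalIntegrable_of_Icc hab)
          (intervalIntegrable_const.add (hdist.intervalIntegrable _ _))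
          fun v hv => hf.le_add_mul hv hu
    _ = _ := by
      rw [integral_add intervalIntegrable_const (hdist.intervalIntegrable _ _),
        integral_const_mul, integral_abs_sub_of_mem_Icc hu, integral_const, smul_eq_mul]

theorem LipschitzOnWith.mul_integral_unitInterval_le {f : ℝ → ℝ} {K : ℝ≥0} {p' p : ℝ}
    (hf : LipschitzOnWith K f (Icc 0 1)) (hp' : 0 ≤ p') (hpp : p' ≤ p) (hp : p ≤ 1) :
    (p - p') * ∫ v in (0:ℝ)..1, f v ≤
      (∫ u in p'..p, f u) + K / 2 * (2 * (p ^ 3 - p' ^ 3) / 3 - (p ^ 2 - p' ^ 2) + (p - p')) := by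
  have hsub : Icc p' p ⊆ Icc 0 1 := Icc_subset_Icc hp' hp
  have hquad : Continuous fun u : ℝ => K * (u ^ 2 - u + 1 / 2) := by fun_prop
  have hf' : IntervalIntegrable f MeasureTheory.volume p' p :=
    (hf.continuousOn.mono hsub).intervalIntegrable_of_Icc hpp
  calc (p - p') * ∫ v in (0:ℝ)..1, f v = ∫ _ in p'..p, ∫ v in (0:ℝ)..1, f v := by
        rw [integral_const, smul_eq_mul]
    _ ≤ ∫ u in p'..p, (f u + K * (u ^ 2 - u + 1 / 2)) :=
        integral_mono_on hpp intervalIntegrable_const (hf'.add (hquad.intervalIntegrable _ _))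
          fun u hu => (hf.integral_le zero_le_one (hsub hu)).trans_eq (by ring)
    _ = _ := by
      rw [integral_add hf' (hquad.intervalIntegrable _ _), integral_const_mul]
      simp only [one_div, intervalIntegrable_pow, intervalIntegrable_id, IntervalIntegrable.sub,
        intervalIntegrable_const, integral_add, integral_sub, integral_pow, Nat.reduceAdd,
        Nat.cast_ofNat, integral_id, integral_const, smul_eq_mul, add_right_inj]
      ring

/-- With a bounded outcome (`m1 ≤ Yu1`, `m0 ≥ Yl0` on `[0,1]`), the ATE is bounded
above by the minimum of the Manski worst-case bound `Yu1 - Yl0` and the smoothness-based bound. -/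
theorem ate_upper_bound_with_manski
    (b : ℝ) (hb : 0 ≤ b) (m1 m0 : ℝ → ℝ)
    (hm1 : ∀ v1 ∈ Set.Icc (0:ℝ) 1, ∀ v2 ∈ Set.Icc (0:ℝ) 1, |m1 v1 - m1 v2| ≤ b * |v1 - v2|)
    (hm0 : ∀ v1 ∈ Set.Icc (0:ℝ) 1, ∀ v2 ∈ Set.Icc (0:ℝ) 1, |m0 v1 - m0 v2| ≤ b * |v1 - v2|)
    (Yu1 Yl0 : ℝ)
    (hub : ∀ v ∈ Set.Icc (0:ℝ) 1, m1 v ≤ Yu1)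
    (hlb : ∀ v ∈ Set.Icc (0:ℝ) 1, Yl0 ≤ m0 v)
    (p' p : ℝ) (hp' : 0 ≤ p') (hpp : p' < p) (hp : p ≤ 1)
    (ΔY : ℝ) (hΔY : ΔY = ∫ v in p'..p, (m1 v - m0 v)) :
    (∫ v in (0:ℝ)..1, (m1 v - m0 v)) ≤
      min (Yu1 - Yl0)
        (ΔY / (p - p') + (2 * b / 3) * (p ^ 3 - p' ^ 3) / (p - p')
          - b * (p ^ 2 - p' ^ 2) / (p - p') + b) := by
  have hD : LipschitzOnWith (b.toNNReal + b.toNNReal) (fun v => m1 v - m0 v) (Icc 0 1) :=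
    (LipschitzOnWith.of_dist_le' hm1).sub (LipschitzOnWith.of_dist_le' hm0)
  have hK : ((b.toNNReal + b.toNNReal : ℝ≥0) : ℝ) / 2 = b := by
    push_cast [Real.coe_toNNReal b hb]
    ring
  refine le_min ?manski ?smooth
  case manski =>
    calc ∫ v in (0:ℝ)..1, (m1 v - m0 v) ≤ ∫ _ in (0:ℝ)..1, (Yu1 - Yl0) :=
          integral_mono_on zero_le_one (hD.continuousOn.intervalIntegrable_of_Icc zero_le_one)
            intervalIntegrable_const fun v hv => sub_le_sub (hub v hv) (hlb v hv)
      _ = Yu1 - Yl0 := by simp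
  case smooth =>
    have hbound := hD.mul_integral_unitInterval_le hp' hpp.le hp
    rw [hK, ← hΔY] at hbound
    have hlen : 0 < p - p' := sub_pos.2 hpp
    calc ∫ v in (0:ℝ)..1, (m1 v - m0 v)
          = (p - p') * (∫ v in (0:ℝ)..1, (m1 v - m0 v)) / (p - p') := by field_simp
      _ ≤ (ΔY + b * (2 * (p ^ 3 - p' ^ 3) / 3 - (p ^ 2 - p' ^ 2) + (p - p'))) / (p - p') := by
          gcongr
      _ = _ := by
          field_simp
          ring
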